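/- In a free group, the centralizer of any nontrivial element is an infinite cyclic subgroup. -/

import Mathlib

/-!
The centralizer `C` of `g` is free by Nielsen–Schreier, and `g` is a nontrivial element of its
center. In a free group an element `z` commuting with a generator `x` is a power of `x`: after
possibly replacing `x` by `x⁻¹`, the reduced word `w` of `z` does not start with `x⁻¹`, so `x * z`
has reduced word `x w` of length `|w| + 1`; since `z * x` has the same word and its reduced word is
a sublist of `w x`, we get `x w = w x`, i.e. `w = xⁿ`. Hence a central element `z ≠ 1` is a
nonzero power of every generator, so there is at most one generator and `C` is cyclic. It is
infinite because free groups are torsion-free.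
-/

open Subgroup

namespace FreeGroup

variable {α : Type*}

section Words

variable [DecidableEq α]

theorem toWord_mul_of_isReduced {y z : FreeGroup α} (h : IsReduced (y.toWord ++ z.toWord)) :
    (y * z).toWord = y.toWord ++ z.toWord := by
  rw [toWord_mul, h.reduce_eq]

theorem toWord_pow_of_toWord_eq_singleton {y : FreeGroup α} {l : α × Bool} (hy : y.toWord = [l])
    (n : ℕ) : (y ^ n).toWord = List.replicate n l := by
  rw [toWord_pow, hy, List.flatten_replicate_singleton, reduce_replicate]

theorem toWord_append_comm_of_commute {y z : FreeGroup α} (hyz : Commute y z)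
    (h : (y * z).toWord = y.toWord ++ z.toWord) : z.toWord ++ y.toWord = y.toWord ++ z.toWord := by
  have hsub : (y.toWord ++ z.toWord).Sublist (z.toWord ++ y.toWord) :=
    h ▸ hyz.eq ▸ toWord_mul_sublist z y
  exact (hsub.eq_of_length (by simp [Nat.add_comm])).symm

theorem eq_pow_of_commute_of_isReduced_cons {y z : FreeGroup α} {l : α × Bool}
    (hy : y.toWord = [l]) (hyz : Commute y z) (hred : IsReduced (l :: z.toWord)) :
    z = y ^ z.toWord.length := by
  have hword : z.toWord ++ [l] = l :: z.toWord := by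
    simpa [hy] using toWord_append_comm_of_commute hyz (toWord_mul_of_isReduced (by rwa [hy]))
  have hrot : (l :: z.toWord).rotate 1 = l :: z.toWord := by simpa using hword
  have : Nonempty (α × Bool) := ⟨l⟩
  obtain ⟨a, ha⟩ := List.rotate_one_eq_self_iff_eq_replicate.mp hrot
  rw [List.length_cons, List.replicate_succ, List.cons.injEq] at ha
  apply toWord_injective
  rw [toWord_pow_of_toWord_eq_singleton hy, ha.1]
  exact ha.2

end Words

theorem mem_zpowers_of_commute_of {x : α} {z : FreeGroup α} (h : Commute (of x) z) :
    z ∈ zpowers (of x) := by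
  classical
  rcases hw : z.toWord with _ | ⟨l, t⟩
  · simp [toWord_eq_nil_iff.mp hw]
  have hlt : IsReduced (l :: t) := hw ▸ isReduced_toWord
  by_cases hl : l = (x, false)
  · have hy : (of x)⁻¹.toWord = [(x, false)] := by simp [toWord_inv, toWord_of, invRev]
    rw [← zpowers_inv, eq_pow_of_commute_of_isReduced_cons hy h.inv_left
      (by rw [hw, hl]; exact isReduced_cons_cons.mpr ⟨fun _ => rfl, hl ▸ hlt⟩)]
    exact pow_mem (mem_zpowers _) _
  · have hred : IsReduced ((x, true) :: z.toWord) := by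
      rw [hw]
      refine isReduced_cons_cons.mpr ⟨fun hx => ?_, hlt⟩
      obtain ⟨y, b⟩ := l
      cases b <;> simp_all
    rw [eq_pow_of_commute_of_isReduced_cons (toWord_of x) h hred]
    exact pow_mem (mem_zpowers _) _

theorem eq_of_of_zpow_eq_of_zpow {x y : α} {m n : ℤ} (hm : m ≠ 0) (h : of x ^ m = of y ^ n) :
    x = y := by
  classical
  by_contra hxy
  have := congrArg (lift (Pi.mulSingle x (Multiplicative.ofAdd (1 : ℤ)))) h
  simp [Ne.symm hxy] at this
  exact hm this

theorem subsingleton_of_mem_center {z : FreeGroup α} (hz : z ∈ center (FreeGroup α)) (hz1 : z ≠ 1) :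
    Subsingleton α := by
  have hpow (x : α) : ∃ n : ℤ, of x ^ n = z :=
    mem_zpowers_iff.mp (mem_zpowers_of_commute_of (mem_center_iff.mp hz (of x)))
  refine ⟨fun x y => ?_⟩
  obtain ⟨m, rfl⟩ := hpow x
  obtain ⟨n, hn⟩ := hpow y
  exact eq_of_of_zpow_eq_of_zpow (by rintro rfl; exact hz1 (zpow_zero _)) hn.symm

instance [Subsingleton α] : IsCyclic (FreeGroup α) := by
  obtain ⟨g, hg⟩ : ∃ g : FreeGroup α, Set.range (of : α → FreeGroup α) ⊆ zpowers g := by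
    rcases isEmpty_or_nonempty α with _ | ⟨⟨x⟩⟩
    · exact ⟨1, by simp⟩
    · refine ⟨of x, ?_⟩
      rintro _ ⟨y, rfl⟩
      rw [Subsingleton.elim y x]
      exact mem_zpowers _
  rw [isCyclic_iff_exists_zpowers_eq_top]
  exact ⟨g, eq_top_iff.mpr (closure_range_of α ▸ (closure_le _).mpr hg)⟩

end FreeGroup

theorem IsFreeGroup.isCyclic_of_mem_center {G : Type*} [Group G] [IsFreeGroup G] {z : G}
    (hz : z ∈ center G) (hz1 : z ≠ 1) : IsCyclic G := by
  let e := IsFreeGroup.toFreeGroup G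
  have : Subsingleton (IsFreeGroup.Generators G) :=
    FreeGroup.subsingleton_of_mem_center (z := e z)
      (mem_center_iff.mpr fun w => by simpa using congrArg e (mem_center_iff.mp hz (e.symm w)))
      (by simpa using hz1)
  exact isCyclic_of_surjective e.symm e.symm.surjective

/-- In a free group, the centralizer of any nontrivial element is an infinite cyclic
subgroup: it equals the set of integer powers of some element, and it is infinite. -/
theorem stmt1 {α : Type*} (g : FreeGroup α) (hg : g ≠ 1) :
    ∃ h : FreeGroup α,
      Subgroup.centralizer {g} = Subgroup.zpowers h ∧
      (Subgroup.centralizer {g} : Set (FreeGroup α)).Infinite := by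
  have hgC : g ∈ centralizer {g} := mem_centralizer_singleton_iff.mpr rfl
  have : IsCyclic (centralizer {g}) :=
    IsFreeGroup.isCyclic_of_mem_center (z := ⟨g, hgC⟩)
      (mem_center_iff.mpr fun w => Subtype.ext (mem_centralizer_singleton_iff.mp w.2))
      (by simpa using hg)
  obtain ⟨h, hC⟩ := (centralizer {g}).isCyclic_iff_exists_zpowers_eq_top.mp this
  exact ⟨h, hC.symm, (infinite_zpowers.mpr (not_isOfFinOrder_of_isMulTorsionFree hg)).mono
    (zpowers_le.mpr hgC)⟩
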